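/- Assume the non-correlation condition τ(y) σ(x,y)^T = 0 for all x ∈ ℝ^n and y ∈ ℝ^m. If (λ, w) is a classical solution of the critical cell problem at (x, p) and (λ̄, w̄) is a classical solution of the critical cell problem at (x̄, p̄), then min_{y ∈ ℝ^m}(|σ(x,y)^T p|² − |σ(x̄,y)^T p̄|²) ≤ λ − λ̄ ≤ max_{y ∈ ℝ^m}(|σ(x,y)^T p|² − |σ(x̄,y)^T p̄|²). -/

import Mathlib

open Matrix MeasureTheory Set

noncomputable section

/-- Euclidean norm of a vector in `ℝ^k`. -/
def en {k : ℕ} (v : Fin k → ℝ) : ℝ := Real.sqrt (v ⬝ᵥ v)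

/-- Squared Euclidean norm. -/
def sq2 {k : ℕ} (v : Fin k → ℝ) : ℝ := v ⬝ᵥ v

/-- Partial derivative in the `i`-th coordinate direction. -/
def pd {m : ℕ} (w : (Fin m → ℝ) → ℝ) (i : Fin m) (y : Fin m → ℝ) : ℝ :=
  fderiv ℝ w y (Pi.single i 1)

/-- Gradient. -/
def vgrad {m : ℕ} (w : (Fin m → ℝ) → ℝ) (y : Fin m → ℝ) : Fin m → ℝ := fun i => pd w i y

/-- Hessian matrix. -/
def vhess {m : ℕ} (w : (Fin m → ℝ) → ℝ) (y : Fin m → ℝ) : Matrix (Fin m) (Fin m) ℝ :=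
  Matrix.of fun i j => pd (pd w j) i y

/-- `ℤ^m`-periodicity. -/
def ZPer {m : ℕ} (w : (Fin m → ℝ) → ℝ) : Prop :=
  ∀ (y : Fin m → ℝ) (k : Fin m → ℤ), w (y + fun i => (k i : ℝ)) = w y

/-- Standing hypotheses on the data. -/
structure StandingHyp {n m r : ℕ}
    (σ : (Fin n → ℝ) → (Fin m → ℝ) → Matrix (Fin n) (Fin r) ℝ)
    (b : (Fin m → ℝ) → Fin m → ℝ)
    (τ : (Fin m → ℝ) → Matrix (Fin m) (Fin r) ℝ) : Prop where
  σ_bdd : ∃ C : ℝ, ∀ x y i j, |σ x y i j| ≤ C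
  σ_lip : ∃ L : ℝ, ∀ x x' y y' i j, |σ x y i j - σ x' y' i j| ≤ L * (en (x - x') + en (y - y'))
  σ_per : ∀ x y (k : Fin m → ℤ), σ x (y + fun l => (k l : ℝ)) = σ x y
  b_lip : ∃ L : ℝ, ∀ y y' i, |b y i - b y' i| ≤ L * en (y - y')
  b_per : ∀ y (k : Fin m → ℤ), b (y + fun l => (k l : ℝ)) = b y
  τ_lip : ∃ L : ℝ, ∀ y y' i j, |τ y i j - τ y' i j| ≤ L * en (y - y')
  τ_per : ∀ y (k : Fin m → ℤ), τ (y + fun l => (k l : ℝ)) = τ y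
  τ_nondeg : ∃ θ : ℝ, 0 < θ ∧ ∀ y ξ, θ * sq2 ξ ≤ sq2 ((τ y)ᵀ *ᵥ ξ)

/-- Classical solution of the critical cell problem at `(x, p)`. -/
def IsCriticalSol {n m r : ℕ}
    (σ : (Fin n → ℝ) → (Fin m → ℝ) → Matrix (Fin n) (Fin r) ℝ)
    (b : (Fin m → ℝ) → Fin m → ℝ)
    (τ : (Fin m → ℝ) → Matrix (Fin m) (Fin r) ℝ)
    (x p : Fin n → ℝ) (lam : ℝ) (w : (Fin m → ℝ) → ℝ) : Prop :=
  ContDiff ℝ 2 w ∧ ZPer w ∧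
    ∀ y, lam = sq2 ((σ x y)ᵀ *ᵥ p)
        + 2 * ((τ y *ᵥ ((σ x y)ᵀ *ᵥ p)) ⬝ᵥ vgrad w y)
        + b y ⬝ᵥ vgrad w y
        + sq2 ((τ y)ᵀ *ᵥ vgrad w y)
        + Matrix.trace (τ y * (τ y)ᵀ * vhess w y)

/-- Classical solution of the supercritical cell problem at `(x, p)`. -/
def IsSupercriticalSol {n m r : ℕ}
    (σ : (Fin n → ℝ) → (Fin m → ℝ) → Matrix (Fin n) (Fin r) ℝ)
    (b : (Fin m → ℝ) → Fin m → ℝ)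
    (τ : (Fin m → ℝ) → Matrix (Fin m) (Fin r) ℝ)
    (x p : Fin n → ℝ) (lam : ℝ) (w : (Fin m → ℝ) → ℝ) : Prop :=
  ContDiff ℝ 2 w ∧ ZPer w ∧
    ∀ y, lam = sq2 ((σ x y)ᵀ *ᵥ p) + b y ⬝ᵥ vgrad w y
        + Matrix.trace (τ y * (τ y)ᵀ * vhess w y)

/-- Classical solution of the subcritical cell problem at `(x, p)`. -/
def IsSubcriticalSol {n m r : ℕ}
    (σ : (Fin n → ℝ) → (Fin m → ℝ) → Matrix (Fin n) (Fin r) ℝ)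
    (τ : (Fin m → ℝ) → Matrix (Fin m) (Fin r) ℝ)
    (x p : Fin n → ℝ) (lam : ℝ) (w : (Fin m → ℝ) → ℝ) : Prop :=
  ContDiff ℝ 1 w ∧ ZPer w ∧
    ∀ y, lam = sq2 ((τ y)ᵀ *ᵥ vgrad w y + (σ x y)ᵀ *ᵥ p)

/-!
Subtract the two cell equations. Since `τ σᵀ = 0`, the cross term `2 (τ σᵀ p)·Dw` vanishes and
what is left of the Hamiltonian, `b·q + |τᵀq|²`, depends on the gradient `q` alone. At a maximum
point `z` of the periodic function `w - w̄` the gradients of `w` and `w̄` agree and the Hessian of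
`w - w̄` is negative semidefinite, so `tr(ττᵀ D²w(z)) ≤ tr(ττᵀ D²w̄(z))`. Hence
`λ - λ̄ ≤ |σ(x,z)ᵀp|² - |σ(x̄,z)ᵀp̄|²`, which is at most the maximum over `y`; exchanging the two
solutions gives the lower bound.
-/

theorem IsLocalMax.deriv_deriv_nonpos {g : ℝ → ℝ} {t : ℝ} (hmax : IsLocalMax g t)
    (hc : ContinuousAt g t) : deriv (deriv g) t ≤ 0 := by
  -- If `g''(t) > 0`, then `t` is also a local minimum, so `g` is locally constant.
  by_contra! hpos
  have hmin := isLocalMin_of_deriv_deriv_pos hpos hmax.deriv_eq_zero hc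
  have hconst : g =ᶠ[nhds t] fun _ => g t :=
    hmax.and hmin |>.mono fun _ hs => le_antisymm hs.1 hs.2
  have hderiv : deriv g =ᶠ[nhds t] fun _ => 0 := hconst.deriv.trans (by simp)
  simp [hderiv.deriv_eq] at hpos

theorem IsLocalMax.fderiv_fderiv_apply_self_nonpos {E : Type*} [NormedAddCommGroup E]
    [NormedSpace ℝ E] {u : E → ℝ} {z : E} (hmax : IsLocalMax u z) (hu : Differentiable ℝ u)
    (hu₂ : DifferentiableAt ℝ (fderiv ℝ u) z) (v : E) :
    fderiv ℝ (fderiv ℝ u) z v v ≤ 0 := by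
  set ℓ : ℝ → E := fun t => z + t • v
  have hℓ : ∀ t, HasDerivAt ℓ v t := fun t =>
    (((hasDerivAt_id t).smul_const v).const_add z).congr_deriv (one_smul ℝ v)
  have hℓ0 : ℓ 0 = z := by simp [ℓ]
  have hderiv : deriv (u ∘ ℓ) = fun t => fderiv ℝ u (ℓ t) v :=
    funext fun t => ((hu _).hasFDerivAt.comp_hasDerivAt t (hℓ t)).deriv
  have hderiv₂ : HasDerivAt (fun t => fderiv ℝ u (ℓ t) v) (fderiv ℝ (fderiv ℝ u) z v v) 0 := by
    rw [← hℓ0] at hu₂ ⊢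
    simpa using (hu₂.hasFDerivAt.comp_hasDerivAt 0 (hℓ 0)).clm_apply (hasDerivAt_const 0 v)
  have hmaxℓ : IsLocalMax (u ∘ ℓ) 0 := by
    rw [← hℓ0] at hmax
    exact (hℓ 0).continuousAt.tendsto.eventually hmax
  have := hmaxℓ.deriv_deriv_nonpos ((hu _).continuousAt.comp (hℓ 0).continuousAt)
  rwa [hderiv, hderiv₂.deriv] at this

theorem pd_pd_eq_fderiv_fderiv {m : ℕ} {u : (Fin m → ℝ) → ℝ} {z : Fin m → ℝ}
    (hu₂ : DifferentiableAt ℝ (fderiv ℝ u) z) (i j : Fin m) :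
    pd (pd u j) i z = fderiv ℝ (fderiv ℝ u) z (Pi.single i 1) (Pi.single j 1) := by
  rw [pd, show pd u j = fun y => fderiv ℝ u y (Pi.single j 1) from rfl,
    fderiv_clm_apply hu₂ (differentiableAt_const _)]
  simp

theorem dotProduct_vhess_mulVec {m : ℕ} {u : (Fin m → ℝ) → ℝ} {z : Fin m → ℝ}
    (hu₂ : DifferentiableAt ℝ (fderiv ℝ u) z) (v : Fin m → ℝ) :
    v ⬝ᵥ (vhess u z *ᵥ v) = fderiv ℝ (fderiv ℝ u) z v v := by
  have hv : v = ∑ i, v i • Pi.single i 1 := by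
    ext j
    simp [Pi.single_apply]
  conv_rhs => rw [hv]
  simp only [dotProduct, mulVec, vhess, of_apply, pd_pd_eq_fderiv_fderiv hu₂, map_sum, map_smul,
    FunLike.coe_sum, Finset.sum_apply, FunLike.coe_smul, Pi.smul_apply,
    smul_eq_mul, Finset.mul_sum]
  rw [Finset.sum_comm]
  exact Finset.sum_congr rfl fun i _ => Finset.sum_congr rfl fun j _ => by ring

theorem trace_mul_transpose_mul_nonpos {m r : Type*} [Fintype m] [Fintype r]
    (T : Matrix m r ℝ) {M : Matrix m m ℝ} (hM : ∀ v, v ⬝ᵥ (M *ᵥ v) ≤ 0) :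
    trace (T * Tᵀ * M) ≤ 0 := by
  have hcols : trace (T * Tᵀ * M) = ∑ j, Tᵀ j ⬝ᵥ (M *ᵥ Tᵀ j) := by
    rw [Matrix.mul_assoc, trace_mul_comm]
    simp only [trace, diag, mul_apply, transpose_apply, dotProduct, mulVec, Finset.sum_mul,
      Finset.mul_sum]
    refine Finset.sum_congr rfl fun j _ => ?_
    rw [Finset.sum_comm]
    simp only [mul_comm, mul_left_comm]
  rw [hcols]
  exact Finset.sum_nonpos fun j _ => hM _

theorem IsLocalMax.trace_mul_vhess_nonpos {m r : ℕ} {u : (Fin m → ℝ) → ℝ} {z : Fin m → ℝ}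
    (hmax : IsLocalMax u z) (hu : Differentiable ℝ u) (hu₂ : DifferentiableAt ℝ (fderiv ℝ u) z)
    (T : Matrix (Fin m) (Fin r) ℝ) : trace (T * Tᵀ * vhess u z) ≤ 0 :=
  trace_mul_transpose_mul_nonpos T fun v => by
    rw [dotProduct_vhess_mulVec hu₂]
    exact hmax.fderiv_fderiv_apply_self_nonpos hu hu₂ v

theorem IsLocalMax.vgrad_eq_zero {m : ℕ} {u : (Fin m → ℝ) → ℝ} {z : Fin m → ℝ}
    (hmax : IsLocalMax u z) : vgrad u z = 0 := by
  funext i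
  simp [vgrad, pd, hmax.fderiv_eq_zero]

section sub

variable {m : ℕ} {w w' : (Fin m → ℝ) → ℝ} {z : Fin m → ℝ}

theorem pd_sub_apply (hw : DifferentiableAt ℝ w z) (hw' : DifferentiableAt ℝ w' z) (i : Fin m) :
    pd (w - w') i z = pd w i z - pd w' i z := by
  simp [pd, fderiv_sub hw hw']

theorem vgrad_sub (hw : DifferentiableAt ℝ w z) (hw' : DifferentiableAt ℝ w' z) :
    vgrad (w - w') z = vgrad w z - vgrad w' z :=
  funext (pd_sub_apply hw hw')

theorem differentiableAt_pd (hw₂ : DifferentiableAt ℝ (fderiv ℝ w) z) (i : Fin m) :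
    DifferentiableAt ℝ (pd w i) z :=
  hw₂.clm_apply (differentiableAt_const _)

theorem vhess_sub (hw : Differentiable ℝ w) (hw' : Differentiable ℝ w')
    (hw₂ : DifferentiableAt ℝ (fderiv ℝ w) z) (hw₂' : DifferentiableAt ℝ (fderiv ℝ w') z) :
    vhess (w - w') z = vhess w z - vhess w' z := by
  ext i j
  have hpd : pd (w - w') j = pd w j - pd w' j := funext fun y => pd_sub_apply (hw y) (hw' y) j
  simp only [vhess, of_apply, Matrix.sub_apply, hpd,
    pd_sub_apply (differentiableAt_pd hw₂ j) (differentiableAt_pd hw₂' j)]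

end sub

section periodic

variable {m : ℕ} {f g : (Fin m → ℝ) → ℝ}

theorem ZPer.sub (hf : ZPer f) (hg : ZPer g) : ZPer (f - g) := fun y k => by
  simp [hf y k, hg y k]

theorem ZPer.exists_mem_Icc_eq (hf : ZPer f) (y : Fin m → ℝ) :
    ∃ y' ∈ Icc (0 : Fin m → ℝ) 1, f y' = f y := by
  refine ⟨fun i => Int.fract (y i),
    ⟨fun i => Int.fract_nonneg _, fun i => (Int.fract_lt_one _).le⟩, ?_⟩
  rw [← hf _ fun i => ⌊y i⌋]
  congr 1
  funext i
  exact Int.fract_add_floor (y i)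

theorem ZPer.exists_forall_le (hf : ZPer f) (hc : Continuous f) : ∃ z, ∀ y, f y ≤ f z := by
  obtain ⟨z, -, hz⟩ := isCompact_Icc.exists_isMaxOn (nonempty_Icc.2 zero_le_one) hc.continuousOn
  refine ⟨z, fun y => ?_⟩
  obtain ⟨y', hy', hfy⟩ := hf.exists_mem_Icc_eq y
  exact hfy ▸ hz hy'

theorem ZPer.exists_forall_ge (hf : ZPer f) (hc : Continuous f) : ∃ z, ∀ y, f z ≤ f y := by
  obtain ⟨z, -, hz⟩ := isCompact_Icc.exists_isMinOn (nonempty_Icc.2 zero_le_one) hc.continuousOn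
  refine ⟨z, fun y => ?_⟩
  obtain ⟨y', hy', hfy⟩ := hf.exists_mem_Icc_eq y
  exact hfy ▸ hz hy'

end periodic

theorem ContDiff.differentiableAt_fderiv {E F : Type*} [NormedAddCommGroup E] [NormedSpace ℝ E]
    [NormedAddCommGroup F] [NormedSpace ℝ F] {f : E → F} (hf : ContDiff ℝ 2 f) (z : E) :
    DifferentiableAt ℝ (fderiv ℝ f) z :=
  (hf.fderiv_right (m := 1) le_rfl).differentiable one_ne_zero z

section CellProblem

variable {n m r : ℕ} {σ : (Fin n → ℝ) → (Fin m → ℝ) → Matrix (Fin n) (Fin r) ℝ}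
  {b : (Fin m → ℝ) → Fin m → ℝ} {τ : (Fin m → ℝ) → Matrix (Fin m) (Fin r) ℝ}

theorem StandingHyp.continuous_σ (hyp : StandingHyp σ b τ) (x : Fin n → ℝ) : Continuous (σ x) := by
  obtain ⟨L, hL⟩ := hyp.σ_lip
  refine continuous_pi fun i => continuous_pi fun j => continuous_iff_continuousAt.2 fun y => ?_
  have hen : Continuous fun y' => en (y' - y) := Real.continuous_sqrt.comp <|
    (continuous_id.sub continuous_const).dotProduct (continuous_id.sub continuous_const)
  have hlim : Filter.Tendsto (fun y' => L * (en (x - x) + en (y' - y))) (nhds y) (nhds 0) := by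
    simpa [en] using (hen.tendsto y).const_add (en (x - x)) |>.const_mul L
  refine tendsto_iff_dist_tendsto_zero.2 <| squeeze_zero (fun _ => dist_nonneg) (fun y' => ?_) hlim
  exact hL x x y' y i j

theorem StandingHyp.continuous_sq2_mulVec (hyp : StandingHyp σ b τ) (x p : Fin n → ℝ) :
    Continuous fun y => sq2 ((σ x y)ᵀ *ᵥ p) :=
  have hv := (hyp.continuous_σ x).matrix_transpose.matrix_mulVec (continuous_const (y := p))
  hv.dotProduct hv

theorem IsCriticalSol.eq_of_noncorrelated {x p : Fin n → ℝ} {lam : ℝ} {w : (Fin m → ℝ) → ℝ}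
    (h : IsCriticalSol σ b τ x p lam w) (huncor : ∀ y, τ y * (σ x y)ᵀ = 0) (y : Fin m → ℝ) :
    lam = sq2 ((σ x y)ᵀ *ᵥ p) + b y ⬝ᵥ vgrad w y + sq2 ((τ y)ᵀ *ᵥ vgrad w y)
      + trace (τ y * (τ y)ᵀ * vhess w y) := by
  rw [h.2.2 y, mulVec_mulVec, huncor, zero_mulVec, zero_dotProduct, mul_zero, add_zero]

theorem IsCriticalSol.exists_sub_le_of_noncorrelated
    (huncor : ∀ x y, τ y * (σ x y)ᵀ = 0) {x xbar p pbar : Fin n → ℝ} {lam lambar : ℝ}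
    {w wbar : (Fin m → ℝ) → ℝ} (h : IsCriticalSol σ b τ x p lam w)
    (hbar : IsCriticalSol σ b τ xbar pbar lambar wbar) :
    ∃ z, lam - lambar ≤ sq2 ((σ x z)ᵀ *ᵥ p) - sq2 ((σ xbar z)ᵀ *ᵥ pbar) := by
  have hw : ContDiff ℝ 2 w := h.1
  have hwbar : ContDiff ℝ 2 wbar := hbar.1
  have hd := hw.differentiable two_ne_zero
  have hdbar := hwbar.differentiable two_ne_zero
  obtain ⟨z, hz⟩ := (h.2.1.sub hbar.2.1).exists_forall_le (hw.continuous.sub hwbar.continuous)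
  have hmax : IsLocalMax (w - wbar) z := Filter.Eventually.of_forall hz
  have hgrad : vgrad w z = vgrad wbar z := by
    rw [← sub_eq_zero, ← vgrad_sub (hd z) (hdbar z)]
    exact hmax.vgrad_eq_zero
  have htrace : trace (τ z * (τ z)ᵀ * vhess w z) ≤ trace (τ z * (τ z)ᵀ * vhess wbar z) := by
    have := hmax.trace_mul_vhess_nonpos (hd.sub hdbar)
      ((hw.sub hwbar).differentiableAt_fderiv z) (τ z)
    rwa [vhess_sub hd hdbar (hw.differentiableAt_fderiv z) (hwbar.differentiableAt_fderiv z),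
      Matrix.mul_sub, trace_sub, sub_nonpos] at this
  refine ⟨z, ?_⟩
  rw [h.eq_of_noncorrelated (huncor x) z, hbar.eq_of_noncorrelated (huncor xbar) z, hgrad]
  linarith

end CellProblem

/-- under the non-correlation condition `τ σᵀ = 0`, the difference of two
critical effective Hamiltonian values is sandwiched between the (attained) min and max of
`|σ(x,y)ᵀp|² − |σ(x̄,y)ᵀp̄|²` over `y`. -/
theorem stmt5 {n m r : ℕ}
    (σ : (Fin n → ℝ) → (Fin m → ℝ) → Matrix (Fin n) (Fin r) ℝ)
    (b : (Fin m → ℝ) → Fin m → ℝ)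
    (τ : (Fin m → ℝ) → Matrix (Fin m) (Fin r) ℝ)
    (hyp : StandingHyp σ b τ)
    (huncor : ∀ (x : Fin n → ℝ) (y : Fin m → ℝ), τ y * (σ x y)ᵀ = 0)
    (x xbar p pbar : Fin n → ℝ) (lam lambar : ℝ) (w wbar : (Fin m → ℝ) → ℝ)
    (h : IsCriticalSol σ b τ x p lam w)
    (hbar : IsCriticalSol σ b τ xbar pbar lambar wbar) :
    ∃ y₀ y₁ : Fin m → ℝ,
      (∀ y, sq2 ((σ x y₀)ᵀ *ᵥ p) - sq2 ((σ xbar y₀)ᵀ *ᵥ pbar)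
          ≤ sq2 ((σ x y)ᵀ *ᵥ p) - sq2 ((σ xbar y)ᵀ *ᵥ pbar)) ∧
      (∀ y, sq2 ((σ x y)ᵀ *ᵥ p) - sq2 ((σ xbar y)ᵀ *ᵥ pbar)
          ≤ sq2 ((σ x y₁)ᵀ *ᵥ p) - sq2 ((σ xbar y₁)ᵀ *ᵥ pbar)) ∧
      sq2 ((σ x y₀)ᵀ *ᵥ p) - sq2 ((σ xbar y₀)ᵀ *ᵥ pbar) ≤ lam - lambar ∧
      lam - lambar ≤ sq2 ((σ x y₁)ᵀ *ᵥ p) - sq2 ((σ xbar y₁)ᵀ *ᵥ pbar) := by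
  have hcont := (hyp.continuous_sq2_mulVec x p).sub (hyp.continuous_sq2_mulVec xbar pbar)
  have hper : ZPer fun y => sq2 ((σ x y)ᵀ *ᵥ p) - sq2 ((σ xbar y)ᵀ *ᵥ pbar) := fun y k => by
    simp only [hyp.σ_per]
  obtain ⟨y₀, hy₀⟩ := hper.exists_forall_ge hcont
  obtain ⟨y₁, hy₁⟩ := hper.exists_forall_le hcont
  obtain ⟨z, hz⟩ := h.exists_sub_le_of_noncorrelated huncor hbar
  obtain ⟨z', hz'⟩ := hbar.exists_sub_le_of_noncorrelated huncor h
  exact ⟨y₀, y₁, hy₀, hy₁, by linarith [hy₀ z'], by linarith [hy₁ z]⟩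

end
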